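/- Let k ≥ 3 and let b : Fin k → ℤ be monotone (b i ≤ b j whenever i ≤ j) such that ∑_{i ∈ S} b i > 0 for every subset S of Fin k of cardinality 3, and b i + b j > −2 for all pairs of distinct indices i ≠ j. Then at least one of the following holds: (i) b i ≥ 0 for all i; (ii) b 0 < 0 and b i > 0 for all i ≥ 1; (iii) b 0 < 0, b 1 = 0, and 2 + ∑_{i : Fin k} b i ≥ k. -/
import Mathlib


/-- Combinatorial trichotomy underlying Theorem 4.4. -/
theorem stmt_8 (k : ℕ) (hk : 3 ≤ k) (b : Fin k → ℤ) (hmono : Monotone b)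
    (h3 : ∀ S : Finset (Fin k), S.card = 3 → 0 < ∑ i ∈ S, b i)
    (h2 : ∀ i j : Fin k, i ≠ j → -2 < b i + b j) :
    (∀ i : Fin k, 0 ≤ b i) ∨
      (b ⟨0, by omega⟩ < 0 ∧ ∀ i : Fin k, 1 ≤ (i : ℕ) → 0 < b i) ∨
      (b ⟨0, by omega⟩ < 0 ∧ b ⟨1, by omega⟩ = 0 ∧ (k : ℤ) ≤ 2 + ∑ i : Fin k, b i) := by
  set i0 : Fin k := ⟨0, by omega⟩ with hi0
  set i1 : Fin k := ⟨1, by omega⟩ with hi1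
  set i2 : Fin k := ⟨2, by omega⟩ with hi2
  have h01 : i0 ≠ i1 := by simp [hi0, hi1, Fin.ext_iff]
  have h02 : i0 ≠ i2 := by simp [hi0, hi2, Fin.ext_iff]
  have h12 : i1 ≠ i2 := by simp [hi1, hi2, Fin.ext_iff]
  by_cases hb0 : 0 ≤ b i0
  · left
    intro i
    exact le_trans hb0 (hmono (by simp [hi0, Fin.le_def]))
  · push_neg at hb0
    -- b i0 + b i1 > -2, b i0 ≤ b i1, b i0 < 0 ⇒ b i1 ≥ 0
    have hpair := h2 i0 i1 h01
    have hb01 : b i0 ≤ b i1 := hmono (by simp [hi0, hi1, Fin.le_def])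
    have hb1 : 0 ≤ b i1 := by omega
    rcases lt_or_eq_of_le hb1 with hb1pos | hb1zero
    · right; left
      refine ⟨hb0, fun i hi => lt_of_lt_of_le hb1pos (hmono ?_)⟩
      simpa [hi1, Fin.le_def] using hi
    · right; right
      refine ⟨hb0, hb1zero.symm, ?_⟩
      -- triple condition on {i0, i1, i2}
      have hcard : ({i0, i1, i2} : Finset (Fin k)).card = 3 := by
        rw [Finset.card_insert_of_notMem (by simp [h01, h02]),
          Finset.card_insert_of_notMem (by simp [h12])]
        simp
      have htriple := h3 {i0, i1, i2} hcard
      rw [Finset.sum_insert (by simp [h01, h02]),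
        Finset.sum_insert (by simp [h12]), Finset.sum_singleton] at htriple
      have hb2 : 1 - b i0 ≤ b i2 := by omega
      -- split the total sum
      have hsub : ({i0, i1} : Finset (Fin k)) ⊆ Finset.univ := Finset.subset_univ _
      have hsplit : ∑ i ∈ Finset.univ \ {i0, i1}, b i + ∑ i ∈ ({i0, i1} : Finset (Fin k)), b i
          = ∑ i : Fin k, b i := Finset.sum_sdiff hsub
      have hpairsum : ∑ i ∈ ({i0, i1} : Finset (Fin k)), b i = b i0 + b i1 :=
        Finset.sum_pair h01
      have hcard2 : (Finset.univ \ ({i0, i1} : Finset (Fin k))).card = k - 2 := by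
        rw [Finset.card_sdiff_of_subset hsub, Finset.card_univ, Fintype.card_fin,
          Finset.card_pair h01]
      have hlb : (k - 2 : ℕ) • (1 - b i0) ≤ ∑ i ∈ Finset.univ \ ({i0, i1} : Finset (Fin k)), b i := by
        rw [← hcard2]
        apply Finset.card_nsmul_le_sum
        intro i hi
        simp only [Finset.mem_sdiff, Finset.mem_insert, Finset.mem_singleton] at hi
        have hi2le : i2 ≤ i := by
          rcases hi with ⟨-, hne⟩
          push_neg at hne
          have h0 : i.val ≠ 0 := fun h => hne.1 (Fin.ext h)
          have h1 : i.val ≠ 1 := fun h => hne.2 (Fin.ext h)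
          show (2 : ℕ) ≤ i.val
          omega
        exact le_trans hb2 (hmono hi2le)
      rw [nsmul_eq_mul] at hlb
      have hcast : ((k - 2 : ℕ) : ℤ) = (k : ℤ) - 2 := by
        have : (2 : ℕ) ≤ k := by omega
        push_cast [Nat.cast_sub this]
        ring
      rw [hcast] at hlb
      have hk3 : (3 : ℤ) ≤ (k : ℤ) := by exact_mod_cast hk
      nlinarith [hlb, hsplit, hpairsum, hb0, hb1zero]
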